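/- arXiv:0704.2326 — 2 statements merged into one kernel-verified Lean document; each statement's English description precedes it below -/
import Mathlib

section
/- Let U, Ũ, V, Ṽ : ℝ × ℝ → Matrix (Fin 2) (Fin 2) ℂ all be traceless, and let L : ℝ × ℝ → Matrix (Fin 2) (Fin 2) ℂ be differentiable satisfying ∂ₓL = ŨL − LU and ∂ₜL = ṼL − LV. Then det L is constant: ∂ₓ(det L) = 0 and ∂ₜ(det L) = 0. -/
open Matrix

/-- Partial derivative in the first variable, entrywise, of a matrix-valued function. -/
noncomputable def matPderivX (F : ℝ × ℝ → Matrix (Fin 2) (Fin 2) ℂ) (x t : ℝ) :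
    Matrix (Fin 2) (Fin 2) ℂ :=
  Matrix.of fun i j => deriv (fun x' => F (x', t) i j) x

/-- Partial derivative in the second variable, entrywise, of a matrix-valued function. -/
noncomputable def matPderivT (F : ℝ × ℝ → Matrix (Fin 2) (Fin 2) ℂ) (x t : ℝ) :
    Matrix (Fin 2) (Fin 2) ℂ :=
  Matrix.of fun i j => deriv (fun t' => F (x, t') i j) t

/-!
Jacobi's formula `(det L)' = tr (adj L · L')` turns the defect equation `L' = Ũ L − L U` into
`(det L)' = det L · (tr Ũ − tr U)`, because `adj L · L = L · adj L = det L · 1`.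
Tracelessness of the Lax matrices makes the right-hand side vanish, in `x` and in `t` alike.
-/

theorem Matrix.trace_adjugate_mul_sub_mul {n R : Type*} [Fintype n] [DecidableEq n] [CommRing R]
    (M A B : Matrix n n R) :
    trace (adjugate M * (A * M - M * B)) = M.det * (trace A - trace B) := by
  rw [Matrix.mul_sub, trace_sub, ← Matrix.mul_assoc, trace_mul_comm, ← Matrix.mul_assoc,
    ← Matrix.mul_assoc, mul_adjugate, adjugate_mul, smul_mul_assoc, smul_mul_assoc,
    Matrix.one_mul, Matrix.one_mul, trace_smul, trace_smul, smul_eq_mul, smul_eq_mul, mul_sub]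

section Jacobi

variable {𝕜 R : Type*} [NontriviallyNormedField 𝕜] [NormedCommRing R] [NormedAlgebra 𝕜 R]

theorem Matrix.hasDerivAt_det_fin_two {L : 𝕜 → Matrix (Fin 2) (Fin 2) R}
    {L' : Matrix (Fin 2) (Fin 2) R} {s : 𝕜}
    (hL : ∀ i j, HasDerivAt (fun s => L s i j) (L' i j) s) :
    HasDerivAt (fun s => (L s).det) (trace (adjugate (L s) * L')) s := by
  simp only [det_fin_two]
  refine (((hL 0 0).mul (hL 1 1)).sub ((hL 0 1).mul (hL 1 0))).congr_deriv ?_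
  rw [adjugate_fin_two, trace_fin_two]
  simp only [Fin.isValue, mul_apply, of_apply, cons_val', cons_val_fin_one, cons_val_zero,
    Fin.sum_univ_two, cons_val_one, neg_mul]
  ring

theorem Matrix.hasDerivAt_det_fin_two_of_hasDerivAt_mul_sub_mul
    {L A B : 𝕜 → Matrix (Fin 2) (Fin 2) R} {s : 𝕜}
    (hL : ∀ i j, HasDerivAt (fun s => L s i j) ((A s * L s - L s * B s) i j) s) :
    HasDerivAt (fun s => (L s).det) ((L s).det * (trace (A s) - trace (B s))) s := by
  rw [← trace_adjugate_mul_sub_mul]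
  exact hasDerivAt_det_fin_two hL

end Jacobi

theorem hasDerivAt_matPderivX {L : ℝ × ℝ → Matrix (Fin 2) (Fin 2) ℂ} {x t : ℝ} {i j : Fin 2}
    (hL : DifferentiableAt ℝ (fun p => L p i j) (x, t)) :
    HasDerivAt (fun x' => L (x', t) i j) (matPderivX L x t i j) x :=
  (hL.comp (f := fun x' : ℝ => (x', t)) x
    (differentiableAt_id.prodMk (differentiableAt_const t))).hasDerivAt

theorem hasDerivAt_matPderivT {L : ℝ × ℝ → Matrix (Fin 2) (Fin 2) ℂ} {x t : ℝ} {i j : Fin 2}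
    (hL : DifferentiableAt ℝ (fun p => L p i j) (x, t)) :
    HasDerivAt (fun t' => L (x, t') i j) (matPderivT L x t i j) t :=
  (hL.comp (f := fun t' : ℝ => (x, t')) t
    ((differentiableAt_const x).prodMk differentiableAt_id)).hasDerivAt

theorem det_defect_matrix_const
    (U Ut V Vt L : ℝ × ℝ → Matrix (Fin 2) (Fin 2) ℂ)
    (htrU : ∀ p, (U p).trace = 0) (htrUt : ∀ p, (Ut p).trace = 0)
    (htrV : ∀ p, (V p).trace = 0) (htrVt : ∀ p, (Vt p).trace = 0)
    (hL : ∀ i j, Differentiable ℝ (fun p => L p i j))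
    (hLx : ∀ x t, matPderivX L x t = Ut (x, t) * L (x, t) - L (x, t) * U (x, t))
    (hLt : ∀ x t, matPderivT L x t = Vt (x, t) * L (x, t) - L (x, t) * V (x, t)) :
    ∀ x t, deriv (fun x' => (L (x', t)).det) x = 0 ∧
      deriv (fun t' => (L (x, t')).det) t = 0 := by
  intro x t
  constructor
  · have hdet := hasDerivAt_det_fin_two_of_hasDerivAt_mul_sub_mul
      (L := fun x' => L (x', t)) (A := fun x' => Ut (x', t)) (B := fun x' => U (x', t)) (s := x)
      fun i j => by rw [← hLx]; exact hasDerivAt_matPderivX (hL i j _)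
    rw [hdet.deriv, htrUt, htrU, sub_zero, mul_zero]
  · have hdet := hasDerivAt_det_fin_two_of_hasDerivAt_mul_sub_mul
      (L := fun t' => L (x, t')) (A := fun t' => Vt (x, t')) (B := fun t' => V (x, t')) (s := t)
      fun i j => by rw [← hLt]; exact hasDerivAt_matPderivT (hL i j _)
    rw [hdet.deriv, htrVt, htrV, sub_zero, mul_zero]
end

section
/- Let a₁, a₂, a₃, a₄ : ℝ → ℂ be differentiable and let q, r, q̃, r̃ : ℝ → ℂ. Suppose a₂' = q̃a₄ − qa₁, a₃' = r̃a₁ − ra₄, (a₁a₄ − a₂a₃)' = 0, a₁' + a₄' = 0, (q̃ − q)a₃ + (r̃ − r)a₂ = 0, and a₄(x) ≠ a₁(x) for all x. Then a₁' = q̃a₃ − ra₂ and a₄' = r̃a₂ − qa₃. -/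
/-!
Differentiating `a₁a₄ - a₂a₃` and eliminating `a₄' = -a₁'` gives
`a₁' (a₄ - a₁) = a₂' a₃ + a₂ a₃'`. Inserting the equations for `a₂'` and `a₃'`, the right-hand side
equals `(q̃a₃ - ra₂)(a₄ - a₁)` up to `a₁` times the constraint `(q̃ - q)a₃ + (r̃ - r)a₂ = 0`, so one
may cancel `a₄ - a₁`. The equation for `a₄'` then follows from `a₄' = -a₁'` and the constraint.
-/

theorem deriv_mul_sub_mul {𝕜 𝔸 : Type*} [NontriviallyNormedField 𝕜] [NormedCommRing 𝔸]
    [NormedAlgebra 𝕜 𝔸] {f g h k : 𝕜 → 𝔸} {x : 𝕜} (hf : DifferentiableAt 𝕜 f x)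
    (hg : DifferentiableAt 𝕜 g x) (hh : DifferentiableAt 𝕜 h x) (hk : DifferentiableAt 𝕜 k x) :
    deriv (fun y => f y * g y - h y * k y) x =
      deriv f x * g x + f x * deriv g x - (deriv h x * k x + h x * deriv k x) := by
  rw [deriv_fun_sub (hf.fun_mul hg) (hh.fun_mul hk), deriv_fun_mul hf hg, deriv_fun_mul hh hk]

theorem diag_rates_of_trace_det {R : Type*} [CommRing R] [IsDomain R]
    {a₁ a₂ a₃ a₄ q r qt rt d₁ d₂ d₃ d₄ : R}
    (hd₂ : d₂ = qt * a₄ - q * a₁) (hd₃ : d₃ = rt * a₁ - r * a₄)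
    (hdet : d₁ * a₄ + a₁ * d₄ - (d₂ * a₃ + a₂ * d₃) = 0) (htr : d₁ + d₄ = 0)
    (hrel : (qt - q) * a₃ + (rt - r) * a₂ = 0) (hne : a₄ ≠ a₁) :
    d₁ = qt * a₃ - r * a₂ ∧ d₄ = rt * a₂ - q * a₃ := by
  have hd₁ : d₁ = qt * a₃ - r * a₂ := by
    refine mul_right_cancel₀ (sub_ne_zero.mpr hne) ?_
    linear_combination hdet - a₁ * htr + a₁ * hrel + a₃ * hd₂ + a₂ * hd₃
  exact ⟨hd₁, by linear_combination htr - hd₁ - hrel⟩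

theorem backlund_redundancy
    (a₁ a₂ a₃ a₄ q r qt rt : ℝ → ℂ)
    (h1 : Differentiable ℝ a₁) (h2 : Differentiable ℝ a₂)
    (h3 : Differentiable ℝ a₃) (h4 : Differentiable ℝ a₄)
    (ha2 : ∀ x, deriv a₂ x = qt x * a₄ x - q x * a₁ x)
    (ha3 : ∀ x, deriv a₃ x = rt x * a₁ x - r x * a₄ x)
    (hdet : ∀ x, deriv (fun y => a₁ y * a₄ y - a₂ y * a₃ y) x = 0)
    (htr : ∀ x, deriv a₁ x + deriv a₄ x = 0)
    (hrel : ∀ x, (qt x - q x) * a₃ x + (rt x - r x) * a₂ x = 0)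
    (hne : ∀ x, a₄ x ≠ a₁ x) :
    (∀ x, deriv a₁ x = qt x * a₃ x - r x * a₂ x) ∧
    (∀ x, deriv a₄ x = rt x * a₂ x - q x * a₃ x) := by
  have hdiag x := diag_rates_of_trace_det (ha2 x) (ha3 x)
    (deriv_mul_sub_mul (h1 x) (h4 x) (h2 x) (h3 x) ▸ hdet x) (htr x) (hrel x) (hne x)
  exact ⟨fun x => (hdiag x).1, fun x => (hdiag x).2⟩
end
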